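/- In the construction below, the group Γ = ⟨S_0 ∪ {s_g : g ∈ G}⟩ ≤ Aut(T) is spherically transitive and layered; in particular, Γ is a branch group. -/

import Mathlib

namespace BranchPaper

universe u

theorem perm_apply_inv_self' {α : Type*} (e : Equiv.Perm α) (x : α) : e (e⁻¹ x) = x :=
  Equiv.apply_symm_apply e x

theorem perm_inv_apply_self' {α : Type*} (e : Equiv.Perm α) (x : α) : e⁻¹ (e x) = x :=
  Equiv.symm_apply_apply e x

/-- Vertices at level `n` of the rooted tree defined by the sequence of alphabets `X`:
strings `x₁ ⋯ x_n` with `x_{i+1} ∈ X i` (we index alphabets from `0`). -/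
abbrev Vertex (X : ℕ → Type u) (n : ℕ) : Type u := ∀ i : Fin n, X (i : ℕ)

/-- The shifted sequence of alphabets `𝔛.σⁿ`. -/
abbrev shift (X : ℕ → Type u) (n : ℕ) : ℕ → Type u := fun k => X (n + k)

variable {X : ℕ → Type u}

/-- Compatibility of a sequence of level permutations with truncation: this is precisely
the condition for the family to define an automorphism of the rooted tree. -/
def Compat (p : ∀ n, Equiv.Perm (Vertex X n)) : Prop :=
  ∀ (n : ℕ) (v : Vertex X (n + 1)), Fin.init (p (n + 1) v) = p n (Fin.init v)

/-- The automorphism group of the rooted tree `T_X`, realised as the subgroup of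
`∏ₙ Sym(L(n))` of families of layer permutations compatible with truncation. -/
def treeAutGroup (X : ℕ → Type u) : Subgroup (∀ n, Equiv.Perm (Vertex X n)) where
  carrier := {p | Compat p}
  one_mem' := fun _ _ => rfl
  mul_mem' := by
    intro a b ha hb n v
    show Fin.init (a (n + 1) (b (n + 1) v)) = a n (b n (Fin.init v))
    rw [ha, hb]
  inv_mem' := by
    intro a ha n v
    apply (a n).injective
    show a n (Fin.init ((a (n + 1))⁻¹ v)) = a n ((a n)⁻¹ (Fin.init v))
    rw [← ha n ((a (n + 1))⁻¹ v)]
    erw [Equiv.apply_symm_apply, Equiv.apply_symm_apply]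

/-- `Aut(T_X)`. -/
abbrev TreeAut (X : ℕ → Type u) := ↥(treeAutGroup X)

lemma mem_treeAutGroup {p : ∀ n, Equiv.Perm (Vertex X n)} : p ∈ treeAutGroup X ↔ Compat p :=
  Iff.rfl

lemma TreeAut.compat (g : TreeAut X) : Compat (g.1) := g.2

/-- The first `n` letters of a vertex of length `n + m`. -/
def front {n m : ℕ} (w : Vertex X (n + m)) : Vertex X n := fun i => w (Fin.castAdd m i)

/-- The last `m` letters of a vertex of length `n + m`, as a vertex of the shifted tree. -/
def back {n m : ℕ} (w : Vertex X (n + m)) : Vertex (shift X n) m := fun i => w (Fin.natAdd n i)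

/-- Concatenation of a vertex of `T_X` with a vertex of the shifted tree. -/
def append {n m : ℕ} (v : Vertex X n) (w : Vertex (shift X n) m) : Vertex X (n + m) :=
  Fin.addCases (motive := fun i => X (i : ℕ)) v w

@[simp] lemma front_append {n m : ℕ} (v : Vertex X n) (w : Vertex (shift X n) m) :
    front (append v w) = v := by
  funext i
  show Fin.addCases (motive := fun i => X (i : ℕ)) v w (Fin.castAdd m i) = v i
  exact Fin.addCases_left i

@[simp] lemma back_append {n m : ℕ} (v : Vertex X n) (w : Vertex (shift X n) m) :
    back (append v w) = w := by
  funext i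
  show Fin.addCases (motive := fun i => X (i : ℕ)) v w (Fin.natAdd n i) = w i
  exact Fin.addCases_right i

@[simp] lemma append_front_back {n m : ℕ} (w : Vertex X (n + m)) :
    append (front w) (back w) = w := by
  funext i
  induction i using Fin.addCases with
  | left i =>
      show Fin.addCases (motive := fun i => X (i : ℕ)) (front w) (back w) (Fin.castAdd m i)
        = w (Fin.castAdd m i)
      rw [Fin.addCases_left]
      rfl
  | right i =>
      show Fin.addCases (motive := fun i => X (i : ℕ)) (front w) (back w) (Fin.natAdd n i)
        = w (Fin.natAdd n i)
      rw [Fin.addCases_right]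
      rfl

lemma init_append {n m : ℕ} (v : Vertex X n) (w : Vertex (shift X n) (m + 1)) :
    Fin.init (n := n + m) (append (n := n) (m := m + 1) v w) = append v (Fin.init w) := by
  funext i
  induction i using Fin.addCases with
  | left i =>
      have h1 : Fin.addCases (motive := fun j => X (j : ℕ)) v w (Fin.castAdd (m + 1) i)
          = v i := Fin.addCases_left i
      have h2 : Fin.addCases (motive := fun j => X (j : ℕ)) v (Fin.init w) (Fin.castAdd m i)
          = v i := Fin.addCases_left i
      exact h1.trans h2.symm
  | right i =>
      have h1 : Fin.addCases (motive := fun j => X (j : ℕ)) v w (Fin.natAdd n i.castSucc)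
          = w i.castSucc := Fin.addCases_right i.castSucc
      have h2 : Fin.addCases (motive := fun j => X (j : ℕ)) v (Fin.init w) (Fin.natAdd n i)
          = Fin.init w i := Fin.addCases_right i
      exact h1.trans h2.symm

lemma front_act (g : TreeAut X) (n : ℕ) :
    ∀ (m : ℕ) (w : Vertex X (n + m)), front (g.1 (n + m) w) = g.1 n (front w) := by
  intro m
  induction m with
  | zero => intro w; rfl
  | succ m ih =>
      intro w
      calc front (g.1 (n + (m + 1)) w)
          = front (m := m) (Fin.init (n := n + m) (g.1 (n + m + 1) w)) := rfl
        _ = front (m := m) (g.1 (n + m) (Fin.init (n := n + m) w)) := by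
              rw [g.compat (n + m) w]
        _ = g.1 n (front (Fin.init (n := n + m) w)) := ih _
        _ = g.1 n (front w) := rfl

lemma coe_inv_apply (g : TreeAut X) (n : ℕ) (v : Vertex X n) :
    (g⁻¹).1 n v = (g.1 n)⁻¹ v := rfl

/-- The section `g|_v` of a tree automorphism at a vertex `v`, an automorphism of the
shifted tree, characterised by `g (v * w) = g v * (g|_v) w`. -/
def sectionAt (g : TreeAut X) {n : ℕ} (v : Vertex X n) : TreeAut (shift X n) :=
  ⟨fun m =>
    { toFun := fun w => back (g.1 (n + m) (append v w))
      invFun := fun w => back ((g⁻¹).1 (n + m) (append (g.1 n v) w))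
      left_inv := by
        intro w
        have hfront : front (g.1 (n + m) (append v w)) = g.1 n v := by
          rw [front_act, front_append]
        have key := append_front_back (g.1 (n + m) (append v w))
        rw [hfront] at key
        show back ((g⁻¹).1 (n + m) (append (g.1 n v) (back (g.1 (n + m) (append v w))))) = w
        rw [key]
        have h2 : (g⁻¹).1 (n + m) (g.1 (n + m) (append v w)) = append v w := by
          show (g.1 (n + m))⁻¹ (g.1 (n + m) (append v w)) = append v w
          exact Equiv.symm_apply_apply _ _
        rw [h2, back_append]
      right_inv := by
        intro w
        have hfront : front ((g⁻¹).1 (n + m) (append (g.1 n v) w)) = v := by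
          rw [front_act, front_append]
          show (g.1 n)⁻¹ (g.1 n v) = v
          exact Equiv.symm_apply_apply _ _
        have key := append_front_back ((g⁻¹).1 (n + m) (append (g.1 n v) w))
        rw [hfront] at key
        show back (g.1 (n + m) (append v (back ((g⁻¹).1 (n + m) (append (g.1 n v) w))))) = w
        rw [key]
        have h2 : g.1 (n + m) ((g⁻¹).1 (n + m) (append (g.1 n v) w)) = append (g.1 n v) w := by
          show g.1 (n + m) ((g.1 (n + m))⁻¹ (append (g.1 n v) w)) = append (g.1 n v) w
          exact Equiv.apply_symm_apply _ _
        rw [h2, back_append] },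
   by
    intro m w
    have h1 : Fin.init (n := n + m) (g.1 (n + m + 1) (append (n := n) (m := m + 1) v w))
        = g.1 (n + m) (Fin.init (n := n + m) (append (n := n) (m := m + 1) v w)) :=
      g.compat (n + m) (append (n := n) (m := m + 1) v w)
    calc Fin.init (back (n := n) (m := m + 1)
            (g.1 (n + (m + 1)) (append (n := n) (m := m + 1) v w)))
        = back (m := m) (Fin.init (n := n + m)
            (g.1 (n + m + 1) (append (n := n) (m := m + 1) v w))) := rfl
      _ = back (m := m) (g.1 (n + m)
            (Fin.init (n := n + m) (append (n := n) (m := m + 1) v w))) := by rw [h1]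
      _ = back (g.1 (n + m) (append v (Fin.init w))) := by rw [init_append v w]⟩

/-- An automorphism is finitary if all sections at some level are trivial. -/
def Finitary (g : TreeAut X) : Prop := ∃ n : ℕ, ∀ v : Vertex X n, sectionAt g v = 1

/-- `v` is a prefix of `w`. -/
def IsPrefixOf {n k : ℕ} (v : Vertex X n) (w : Vertex X k) : Prop :=
  ∃ h : n ≤ k, ∀ i : Fin n, w (Fin.castLE h i) = v i

/-- `g` fixes every vertex which does not have `v` as a prefix. -/
def FixesOutside (g : TreeAut X) {n : ℕ} (v : Vertex X n) : Prop :=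
  ∀ (k : ℕ) (w : Vertex X k), ¬ IsPrefixOf v w → g.1 k w = w

/-- A group of tree automorphisms acts spherically transitively if it acts transitively
on every layer. -/
def SphericallyTransitive (G : Subgroup (TreeAut X)) : Prop :=
  ∀ (n : ℕ) (v w : Vertex X n), ∃ g ∈ G, g.1 n v = w

/-- A group of tree automorphisms is layered if for every `g ∈ G` and every vertex `v`,
the insertion `ins_v (g|_v)` (the unique automorphism fixing everything outside the
subtree at `v` and with section `g|_v` at `v`) again belongs to `G`. -/
def Layered (G : Subgroup (TreeAut X)) : Prop :=
  ∀ g ∈ G, ∀ (n : ℕ) (v : Vertex X n),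
    ∃ h : TreeAut X, h ∈ G ∧ FixesOutside h v ∧ sectionAt h v = sectionAt g v

/-- The rigid vertex stabiliser of `v` in `G`. -/
def rist (G : Subgroup (TreeAut X)) {n : ℕ} (v : Vertex X n) : Subgroup (TreeAut X) where
  carrier := {g | g ∈ G ∧ FixesOutside g v}
  one_mem' := ⟨G.one_mem, fun _ _ _ => rfl⟩
  mul_mem' := by
    rintro a b ⟨haG, ha⟩ ⟨hbG, hb⟩
    refine ⟨G.mul_mem haG hbG, fun k w hw => ?_⟩
    show a.1 k (b.1 k w) = w
    rw [hb k w hw, ha k w hw]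
  inv_mem' := by
    rintro a ⟨haG, ha⟩
    refine ⟨G.inv_mem haG, fun k w hw => ?_⟩
    apply (a.1 k).injective
    show a.1 k ((a.1 k)⁻¹ w) = a.1 k w
    erw [Equiv.apply_symm_apply, ha k w hw]

/-- The rigid layer stabiliser `Rist_G(n)`, the subgroup generated by the rigid vertex
stabilisers of the vertices in layer `n`. -/
def RistL (G : Subgroup (TreeAut X)) (n : ℕ) : Subgroup (TreeAut X) :=
  Subgroup.closure (⋃ v : Vertex X n, (rist G v : Set (TreeAut X)))

/-- A ray in the rooted tree. -/
def IsRay (u : ∀ n, Vertex X n) : Prop := ∀ n, Fin.init (u (n + 1)) = u n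

/-- A `𝔲`-generalised spinal element: all sections away from the ray are finitary. -/
def GeneralisedSpinal (u : ∀ n, Vertex X n) (g : TreeAut X) : Prop :=
  ∀ (n : ℕ) (v : Vertex X n), v ≠ u n → Finitary (sectionAt g v)

section Portrait

/-- The action on layers induced by a portrait (a labelling of the vertices by
permutations of the corresponding alphabets). -/
def portraitAct (L : ∀ n, Vertex X n → Equiv.Perm (X n)) : ∀ n, Vertex X n → Vertex X n
  | 0, v => v
  | (n + 1), v =>
      Fin.snoc (portraitAct L n (Fin.init v)) (L n (Fin.init v) (v (Fin.last n)))

lemma portraitAct_injective (L : ∀ n, Vertex X n → Equiv.Perm (X n)) :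
    ∀ n, Function.Injective (portraitAct L n)
  | 0 => fun _ _ h => h
  | (n + 1) => by
      intro a b h
      simp only [portraitAct] at h
      have hinit : Fin.init a = Fin.init b := by
        apply portraitAct_injective L n
        have := congrArg Fin.init h
        simpa [Fin.init_snoc] using this
      have hlast : a (Fin.last n) = b (Fin.last n) := by
        have h2 := congrFun h (Fin.last n)
        rw [Fin.snoc_last, Fin.snoc_last, hinit] at h2
        exact (L n (Fin.init b)).injective h2
      calc a = Fin.snoc (Fin.init a) (a (Fin.last n)) := (Fin.snoc_init_self a).symm
        _ = Fin.snoc (Fin.init b) (b (Fin.last n)) := by rw [hinit, hlast]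
        _ = b := Fin.snoc_init_self b

/-- The tree automorphism determined by a portrait. -/
noncomputable def ofPortrait [∀ k, Finite (X k)] (L : ∀ n, Vertex X n → Equiv.Perm (X n)) :
    TreeAut X :=
  ⟨fun n => Equiv.ofBijective (portraitAct L n)
      (Finite.injective_iff_bijective.mp (portraitAct_injective L n)),
   by
    intro n v
    show Fin.init (portraitAct L (n + 1) v) = portraitAct L n (Fin.init v)
    simp [portraitAct, Fin.init_snoc]⟩

end Portrait

section Construction

variable (S : ℕ → Type u)

/-- The spinal automorphism determined by a sequence `c` of group elements: it has the
rooted permutation induced by `c k` at the vertex `u_k x_{k+1}` and trivial label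
everywhere else. -/
noncomputable def spinalAut [∀ k, Finite (X k)] [∀ n, Group (S n)]
    [∀ n, MulAction (S n) (X n)] (u : ∀ n, Vertex X n) (x : ∀ n, X n)
    (c : ∀ n, S (n + 1)) : TreeAut X :=
  ofPortrait (fun n => match n with
    | 0 => fun _ => 1
    | (k + 1) => fun v =>
        haveI := Classical.propDecidable (v = Fin.snoc (u k) (x k))
        if v = Fin.snoc (u k) (x k) then MulAction.toPerm (c k) else 1)

/-- The rooted automorphism induced by an element acting on the first alphabet. -/
noncomputable def rootedAut (X : ℕ → Type u) [∀ k, Finite (X k)] {R : Type*} [Group R]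
    [MulAction R (X 0)] (s : R) : TreeAut X :=
  ofPortrait (fun n => match n with
    | 0 => fun _ => MulAction.toPerm s
    | (_ + 1) => fun _ => 1)

/-- The group `Fin_𝔖(T)` of finitary automorphisms all of whose labels lie in the images
of the groups `S n` acting on the alphabets, described as a set. -/
def finSet (X : ℕ → Type u) (S : ℕ → Type u) [∀ n, Group (S n)]
    [∀ n, MulAction (S n) (X n)] : Set (TreeAut X) :=
  {g | Finitary g ∧ ∀ (n : ℕ) (v : Vertex X n), ∃ s : S n, ∀ y : X n,
      g.1 (n + 1) (Fin.snoc v y) (Fin.last n) = s • y}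

variable {G : Type u} [Group G]

/-- The branch group `Γ` of the construction. -/
noncomputable def gammaGroup [∀ k, Finite (X k)] [∀ n, Group (S n)]
    [∀ n, MulAction (S n) (X n)] (φ : G →* ∀ n, S (n + 1))
    (u : ∀ n, Vertex X n) (x : ∀ n, X n) : Subgroup (TreeAut X) :=
  Subgroup.closure
    (Set.range (fun s : S 0 => rootedAut X s) ∪
     Set.range (fun g : G => spinalAut S u x (fun n => φ g n)))

/-- The subgroup `Δ(H) = ⟨Fin_𝔖(T) ∪ {s_h : h ∈ H}⟩`. -/
noncomputable def deltaGroup [∀ k, Finite (X k)] [∀ n, Group (S n)]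
    [∀ n, MulAction (S n) (X n)] (φ : G →* ∀ n, S (n + 1))
    (u : ∀ n, Vertex X n) (x : ∀ n, X n) (H : Subgroup G) : Subgroup (TreeAut X) :=
  Subgroup.closure
    (finSet X S ∪ ((fun g : G => spinalAut S u x (fun n => φ g n)) '' (H : Set G)))

end Construction
section Basic

variable {X : ℕ → Type u}

/-- Truncation of a vertex to its first `i` letters. -/
def take {n : ℕ} (v : Vertex X n) (i : ℕ) (h : i ≤ n) : Vertex X i :=
  fun j => v (Fin.castLE h j)

lemma take_take {n : ℕ} (v : Vertex X n) {i j : ℕ} (hij : j ≤ i) (hi : i ≤ n) :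
    take (take v i hi) j hij = take v j (hij.trans hi) := by
  funext k; rfl

lemma init_eq_take {n : ℕ} (v : Vertex X (n + 1)) :
    Fin.init v = take v n (Nat.le_succ n) := by
  funext k; rfl

lemma take_init {n : ℕ} (v : Vertex X (n + 1)) {i : ℕ} (h : i ≤ n) :
    take (Fin.init v) i h = take v i (h.trans (Nat.le_succ n)) := by
  rw [init_eq_take, take_take]

lemma portraitAct_apply (L : ∀ n, Vertex X n → Equiv.Perm (X n)) :
    ∀ (n : ℕ) (v : Vertex X n) (i : Fin n),
      portraitAct L n v i = L i (take v i i.isLt.le) (v i) := by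
  intro n
  induction n with
  | zero => intro v i; exact i.elim0
  | succ n ih =>
      intro v i
      induction i using Fin.lastCases with
      | last =>
          show (Fin.snoc (portraitAct L n (Fin.init v))
            (L n (Fin.init v) (v (Fin.last n))) : Vertex X (n+1)) (Fin.last n) = _
          rw [Fin.snoc_last, init_eq_take]
          rfl
      | cast j =>
          show (Fin.snoc (portraitAct L n (Fin.init v))
            (L n (Fin.init v) (v (Fin.last n))) : Vertex X (n+1)) j.castSucc = _
          rw [Fin.snoc_castSucc, ih (Fin.init v) j]
          show L (j : ℕ) (take (Fin.init v) (j:ℕ) _) (v j.castSucc)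
            = L (j : ℕ) (take v (j:ℕ) _) (v j.castSucc)
          rw [take_init]

end Basic
section Calc
set_option linter.unusedSectionVars false

variable {X : ℕ → Type u} [∀ k, Finite (X k)]

lemma treeAut_ext {g h : TreeAut X} (H : ∀ n v, g.1 n v = h.1 n v) : g = h := by
  apply Subtype.ext; funext n; exact Equiv.ext (H n)

lemma mul_apply' (a b : TreeAut X) (n : ℕ) (v : Vertex X n) :
    (a * b).1 n v = a.1 n (b.1 n v) := rfl

lemma ofPortrait_apply (L : ∀ n, Vertex X n → Equiv.Perm (X n)) (n : ℕ) (v : Vertex X n) :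
    (ofPortrait L).1 n v = portraitAct L n v := rfl

lemma ofPortrait_congr {L M : ∀ n, Vertex X n → Equiv.Perm (X n)}
    (h : ∀ n v, L n v = M n v) : ofPortrait L = ofPortrait M := by
  have : L = M := by funext n v; exact h n v
  rw [this]

lemma ofPortrait_one {L : ∀ n, Vertex X n → Equiv.Perm (X n)}
    (h : ∀ n v, L n v = 1) : ofPortrait L = 1 := by
  apply treeAut_ext; intro n v
  rw [ofPortrait_apply]
  funext i
  rw [portraitAct_apply, h]
  rfl

lemma portraitAct_eq_self_of_triv (L : ∀ n, Vertex X n → Equiv.Perm (X n)) {n : ℕ}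
    (v : Vertex X n) (h : ∀ j, j < n → ∀ w, L j w = 1) : portraitAct L n v = v := by
  funext i
  rw [portraitAct_apply, h i i.isLt]
  rfl

lemma take_portraitAct (L : ∀ n, Vertex X n → Equiv.Perm (X n)) {n : ℕ} (v : Vertex X n)
    {i : ℕ} (h : i ≤ n) : take (portraitAct L n v) i h = portraitAct L i (take v i h) := by
  funext k
  show portraitAct L n v (Fin.castLE h k) = _
  rw [portraitAct_apply, portraitAct_apply]
  show L (k : ℕ) (take v (k:ℕ) _) (v (Fin.castLE h k))
    = L (k : ℕ) (take (take v i h) (k:ℕ) _) (take v i h k)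
  rw [take_take]
  rfl

lemma ofPortrait_mul (L M : ∀ n, Vertex X n → Equiv.Perm (X n)) :
    ofPortrait L * ofPortrait M
      = ofPortrait (fun k w => L k (portraitAct M k w) * M k w) := by
  apply treeAut_ext; intro n v
  rw [mul_apply', ofPortrait_apply, ofPortrait_apply, ofPortrait_apply]
  funext i
  rw [portraitAct_apply, portraitAct_apply, take_portraitAct, portraitAct_apply]
  rfl

lemma append_castAdd {n m : ℕ} (v : Vertex X n) (w : Vertex (shift X n) m) (i : Fin n) :
    append v w (Fin.castAdd m i) = v i := congrFun (front_append v w) i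

lemma append_natAdd {n m : ℕ} (v : Vertex X n) (w : Vertex (shift X n) m) (i : Fin m) :
    append v w (Fin.natAdd n i) = w i := congrFun (back_append v w) i

lemma take_append {n m : ℕ} (v : Vertex X n) (w : Vertex (shift X n) m) {i : ℕ} (h : i ≤ m) :
    take (append v w) (n + i) (Nat.add_le_add_left h n) = append v (take w i h) := by
  funext j
  induction j using Fin.addCases with
  | left j0 =>
      show append v w (Fin.castAdd m j0) = _
      rw [append_castAdd, append_castAdd]
  | right j1 =>
      show append v w (Fin.natAdd n (Fin.castLE h j1)) = _
      rw [append_natAdd, append_natAdd]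
      rfl

lemma append_zero {n : ℕ} (v : Vertex X n) (w : Vertex (shift X n) 0) :
    append v w = v := by
  funext i
  show append v w (Fin.castAdd 0 i) = v i
  rw [append_castAdd]

lemma take_append_self {n m : ℕ} (v : Vertex X n) (w : Vertex (shift X n) m) :
    take (append v w) n (Nat.le_add_right n m) = v := by
  funext j
  show append v w (Fin.castAdd m j) = v j
  rw [append_castAdd]

lemma sectionAt_coe (g : TreeAut X) {n : ℕ} (v : Vertex X n) (m : ℕ)
    (w : Vertex (shift X n) m) :
    (sectionAt g v).1 m w = back (g.1 (n + m) (append v w)) := rfl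

lemma append_section (g : TreeAut X) {n : ℕ} (v : Vertex X n) {m : ℕ}
    (w : Vertex (shift X n) m) :
    g.1 (n + m) (append v w) = append (g.1 n v) ((sectionAt g v).1 m w) := by
  have h1 : front (g.1 (n + m) (append v w)) = g.1 n v := by
    rw [front_act, front_append]
  calc g.1 (n+m) (append v w)
      = append (front (g.1 (n+m) (append v w))) (back (g.1 (n+m) (append v w))) :=
        (append_front_back _).symm
    _ = append (g.1 n v) ((sectionAt g v).1 m w) := by rw [h1]; rfl

lemma sectionAt_mul (a b : TreeAut X) {n : ℕ} (v : Vertex X n) :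
    sectionAt (a * b) v = sectionAt a (b.1 n v) * sectionAt b v := by
  apply treeAut_ext; intro m w
  rw [mul_apply', sectionAt_coe, mul_apply', append_section b v, append_section a (b.1 n v)]
  rw [back_append]

lemma sectionAt_one {n : ℕ} (v : Vertex X n) :
    sectionAt (1 : TreeAut X) v = 1 := by
  apply treeAut_ext; intro m w
  rw [sectionAt_coe]
  show back (append v w) = _
  rw [back_append]
  rfl

lemma sectionAt_inv (a : TreeAut X) {n : ℕ} (v : Vertex X n) :
    sectionAt a⁻¹ v = (sectionAt a ((a⁻¹).1 n v))⁻¹ := by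
  have h := sectionAt_mul a a⁻¹ v
  rw [mul_inv_cancel, sectionAt_one] at h
  exact (inv_eq_iff_mul_eq_one.mpr h.symm).symm

lemma sectionAt_ofPortrait (L : ∀ n, Vertex X n → Equiv.Perm (X n)) {n : ℕ}
    (v : Vertex X n) :
    sectionAt (ofPortrait L) v
      = ofPortrait (X := shift X n) (fun m w => L (n + m) (append v w)) := by
  apply treeAut_ext; intro m w
  rw [sectionAt_coe, ofPortrait_apply, ofPortrait_apply]
  funext i
  show portraitAct L (n+m) (append v w) (Fin.natAdd n i) = _
  rw [portraitAct_apply, portraitAct_apply]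
  show L ((n:ℕ) + (i:ℕ)) (take (append v w) (n + (i:ℕ)) _) (append v w (Fin.natAdd n i))
    = L ((n:ℕ) + (i:ℕ)) (append v (take w (i:ℕ) _)) (w i)
  rw [take_append, append_natAdd]

end Calc
section PrefixFix
set_option linter.unusedSectionVars false

variable {X : ℕ → Type u} [∀ k, Finite (X k)]

lemma take_all {n : ℕ} (w : Vertex X n) (h : n ≤ n) : take w n h = w :=
  funext fun _ => rfl

lemma isPrefixOf_iff_take {n k : ℕ} (h : n ≤ k) (v : Vertex X n) (w : Vertex X k) :
    IsPrefixOf v w ↔ take w n h = v := by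
  constructor
  · rintro ⟨h', hp⟩
    funext i
    exact hp i
  · intro he
    exact ⟨h, fun i => congrFun he i⟩

lemma eq_of_isPrefixOf_same {n : ℕ} {v w : Vertex X n} (h : IsPrefixOf v w) : w = v := by
  rw [isPrefixOf_iff_take le_rfl] at h
  rw [← h, take_all]

lemma isPrefixOf_of_take {n i k : ℕ} (hik : i ≤ k) (hni : n ≤ i) (v : Vertex X n)
    (w : Vertex X k) (h : IsPrefixOf v (take w i hik)) : IsPrefixOf v w := by
  rw [isPrefixOf_iff_take hni] at h
  rw [isPrefixOf_iff_take (hni.trans hik), ← take_take w hni hik]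
  exact h

lemma take_treeAut (g : TreeAut X) {n : ℕ} :
    ∀ (k : ℕ) (h : n ≤ k) (w : Vertex X k), take (g.1 k w) n h = g.1 n (take w n h) := by
  intro k
  induction k with
  | zero =>
      intro h w
      have hn : n = 0 := Nat.le_zero.mp h
      subst hn
      rw [take_all, take_all]
  | succ k ih =>
      intro h w
      rcases Nat.lt_or_ge n (k+1) with hlt | hge
      · have hk : n ≤ k := Nat.lt_succ_iff.mp hlt
        rw [← take_init (g.1 (k+1) w) hk, g.compat k w, ih hk, take_init]
      · have : n = k + 1 := le_antisymm h hge
        subst this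
        rw [take_all, take_all]

lemma isPrefixOf_map (g : TreeAut X) {n k : ℕ} {v : Vertex X n} {w : Vertex X k}
    (h : IsPrefixOf v w) : IsPrefixOf (g.1 n v) (g.1 k w) := by
  obtain ⟨hle, -⟩ := id h
  rw [isPrefixOf_iff_take hle] at h ⊢
  rw [take_treeAut g k hle w, h]

lemma FixesOutside.mul {a b : TreeAut X} {n : ℕ} {v : Vertex X n}
    (ha : FixesOutside a v) (hb : FixesOutside b v) : FixesOutside (a * b) v := by
  intro k w hw
  rw [mul_apply', hb k w hw, ha k w hw]

lemma FixesOutside.one {n : ℕ} (v : Vertex X n) : FixesOutside (1 : TreeAut X) v :=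
  fun _ _ _ => rfl

lemma FixesOutside.inv {a : TreeAut X} {n : ℕ} {v : Vertex X n}
    (ha : FixesOutside a v) : FixesOutside a⁻¹ v := by
  intro k w hw
  apply (a.1 k).injective
  show a.1 k ((a.1 k)⁻¹ w) = a.1 k w
  rw [perm_apply_inv_self', ha k w hw]

lemma FixesOutside.apply_self {a : TreeAut X} {n : ℕ} {v : Vertex X n}
    (ha : FixesOutside a v) : a.1 n v = v := by
  by_contra hne
  have hfix : a.1 n (a.1 n v) = a.1 n v := by
    apply ha
    intro hp
    exact hne (by rw [eq_of_isPrefixOf_same hp])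
  exact hne ((a.1 n).injective hfix)

lemma sectionAt_eq_one_of_ne {a : TreeAut X} {n : ℕ} {v w : Vertex X n}
    (ha : FixesOutside a v) (hw : w ≠ v) : sectionAt a w = 1 := by
  apply treeAut_ext; intro m w'
  rw [sectionAt_coe]
  have : a.1 (n + m) (append w w') = append w w' := by
    apply ha
    intro hp
    rw [isPrefixOf_iff_take (Nat.le_add_right n m)] at hp
    rw [take_append_self] at hp
    exact hw hp
  rw [this, back_append]
  rfl

lemma fixesOutside_ofPortrait {L : ∀ k, Vertex X k → Equiv.Perm (X k)} {n : ℕ}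
    {v : Vertex X n} (hL : ∀ (k : ℕ) (w : Vertex X k), ¬ IsPrefixOf v w → L k w = 1) :
    FixesOutside (ofPortrait L) v := by
  intro k w hw
  rw [ofPortrait_apply]
  funext i
  rw [portraitAct_apply]
  have hL1 : L i (take w i i.isLt.le) = 1 := by
    apply hL
    intro hp
    obtain ⟨hle, -⟩ := id hp
    exact hw (isPrefixOf_of_take i.isLt.le hle v w hp)
  rw [hL1]
  rfl

lemma FixesOutside.conj {t : TreeAut X} (h : TreeAut X) {n : ℕ} {z : Vertex X n}
    (ht : FixesOutside t z) : FixesOutside (h * t * h⁻¹) (h.1 n z) := by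
  intro k w hw
  have hnp : ¬ IsPrefixOf z ((h⁻¹).1 k w) := by
    intro hp
    have := isPrefixOf_map h hp
    rw [coe_inv_apply, perm_apply_inv_self'] at this
    exact hw this
  rw [mul_apply', mul_apply', ht k _ hnp, coe_inv_apply, perm_apply_inv_self']

lemma sectionAt_conj (h t : TreeAut X) {n : ℕ} (z : Vertex X n) (htz : t.1 n z = z)
    (hsec : sectionAt h z = 1) :
    sectionAt (h * t * h⁻¹) (h.1 n z) = sectionAt t z := by
  have hz : (h⁻¹).1 n (h.1 n z) = z := by
    rw [coe_inv_apply, perm_inv_apply_self']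
  rw [sectionAt_mul, sectionAt_inv, hz, sectionAt_mul, htz, hsec, one_mul, inv_one, mul_one]

end PrefixFix
section Ext
set_option linter.unusedSectionVars false

variable {X : ℕ → Type u} [∀ k, Finite (X k)]

lemma exists_take_eq (hne : ∀ j, Nonempty (X j)) {k n : ℕ} (hkn : k ≤ n)
    (w : Vertex X k) : ∃ z : Vertex X n, take z k hkn = w := by
  refine ⟨fun i => if h : (i : ℕ) < k then w ⟨i, h⟩ else Classical.choice (hne i), ?_⟩
  funext j
  have hj : ((Fin.castLE hkn j : Fin n) : ℕ) < k := j.isLt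
  show dite _ _ _ = w j
  rw [dif_pos hj]
  congr 1

lemma ext_by_sections {n : ℕ} {g h : TreeAut X} (hne : ∀ j, Nonempty (X j))
    (hlev : ∀ v : Vertex X n, g.1 n v = h.1 n v)
    (hsec : ∀ v : Vertex X n, sectionAt g v = sectionAt h v) : g = h := by
  apply treeAut_ext
  intro k w
  rcases le_or_gt k n with hk | hk
  · obtain ⟨z, hz⟩ := exists_take_eq hne hk w
    calc g.1 k w = g.1 k (take z k hk) := by rw [hz]
      _ = take (g.1 n z) k hk := (take_treeAut g n hk z).symm
      _ = take (h.1 n z) k hk := by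
            have : g.1 n z = h.1 n z := hlev z
            rw [this]
      _ = h.1 k (take z k hk) := take_treeAut h n hk z
      _ = h.1 k w := by rw [hz]
  · obtain ⟨m, rfl⟩ := Nat.le.dest hk.le
    rw [← append_front_back w, append_section g (front w), append_section h (front w),
      hlev (front w), hsec (front w)]

lemma fixes_level_of_fixesOutside {a : TreeAut X} {n : ℕ} {v : Vertex X n}
    (ha : FixesOutside a v) (w : Vertex X n) : a.1 n w = w := by
  by_cases hw : w = v
  · subst hw; exact ha.apply_self
  · exact ha n w (fun hp => hw (eq_of_isPrefixOf_same hp))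

lemma list_prod_map_eq_single {ι : Type*} {M : Type*} [Monoid M] (f : ι → M) (w : ι) :
    ∀ l : List ι, w ∈ l → (∀ z ∈ l, z ≠ w → f z = 1) → l.Nodup →
      (l.map f).prod = f w := by
  intro l
  induction l with
  | nil => intro hw; exact absurd hw (List.not_mem_nil (a := w))
  | cons a l ih =>
      intro hw hz hnd
      rw [List.map_cons, List.prod_cons]
      rcases List.mem_cons.mp hw with rfl | hw'
      · have : ∀ x ∈ l, f x = 1 := by
          intro x hx
          apply hz x (List.mem_cons_of_mem _ hx)
          intro hxw
          subst hxw
          exact (List.nodup_cons.mp hnd).1 hx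
        rw [List.prod_eq_one (by
          intro y hy
          obtain ⟨x, hx, rfl⟩ := List.mem_map.mp hy
          exact this x hx), mul_one]
      · have ha1 : f a = 1 := by
          apply hz a (List.mem_cons_self (a := a) (l := l))
          intro haw
          subst haw
          exact (List.nodup_cons.mp hnd).1 hw'
        rw [ha1, one_mul]
        exact ih hw' (fun z hzl => hz z (List.mem_cons_of_mem _ hzl)) (List.nodup_cons.mp hnd).2

lemma sectionAt_list_prod {n : ℕ} (v : Vertex X n) :
    ∀ l : List (TreeAut X), (∀ a ∈ l, ∀ z : Vertex X n, a.1 n z = z) →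
      ((l.prod).1 n v = v ∧
        sectionAt l.prod v = (l.map (fun a => sectionAt a v)).prod) := by
  intro l
  induction l with
  | nil =>
      intro _
      refine ⟨rfl, ?_⟩
      rw [List.prod_nil, List.map_nil, List.prod_nil]
      exact sectionAt_one v
  | cons a l ih =>
      intro hl
      obtain ⟨ih1, ih2⟩ := ih (fun b hb => hl b (List.mem_cons_of_mem _ hb))
      constructor
      · rw [List.prod_cons, mul_apply', ih1, hl a (List.mem_cons_self (a := a) (l := l))]
      · rw [List.prod_cons, sectionAt_mul, ih1, List.map_cons, List.prod_cons, ih2]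

lemma portraitAct_snoc (L : ∀ k, Vertex X k → Equiv.Perm (X k)) {n : ℕ}
    (v : Vertex X n) (y : X n) :
    portraitAct L (n + 1) (Fin.snoc v y) = Fin.snoc (portraitAct L n v) (L n v y) := by
  simp only [portraitAct, Fin.init_snoc, Fin.snoc_last]

lemma apply_snoc_decomp (g : TreeAut X) {n : ℕ} (v : Vertex X n) (y : X n) :
    g.1 (n + 1) (Fin.snoc v y)
      = Fin.snoc (g.1 n v) (g.1 (n + 1) (Fin.snoc v y) (Fin.last n)) := by
  have h1 : Fin.init (g.1 (n+1) (Fin.snoc v y)) = g.1 n v := by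
    rw [g.compat n (Fin.snoc v y), Fin.init_snoc]
  calc g.1 (n+1) (Fin.snoc v y)
      = Fin.snoc (Fin.init (g.1 (n+1) (Fin.snoc v y))) (g.1 (n+1) (Fin.snoc v y) (Fin.last n)) :=
        (Fin.snoc_init_self _).symm
    _ = _ := by rw [h1]

lemma take_snoc {n i : ℕ} (v : Vertex X n) (y : X n) (h : i ≤ n) :
    take (Fin.snoc v y : Vertex X (n+1)) i (h.trans (Nat.le_succ n)) = take v i h := by
  funext j
  show (Fin.snoc v y : Vertex X (n+1)) (Fin.castSucc (Fin.castLE h j)) = _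
  rw [Fin.snoc_castSucc]
  rfl

lemma take_ray {u : ∀ n, Vertex X n} (hu : IsRay u) {i : ℕ} :
    ∀ (k : ℕ) (h : i ≤ k), take (u k) i h = u i := by
  intro k
  induction k with
  | zero =>
      intro h
      have : i = 0 := Nat.le_zero.mp h
      subst this
      rw [take_all]
  | succ k ih =>
      intro h
      rcases Nat.lt_or_ge i (k+1) with hlt | hge
      · have hk : i ≤ k := Nat.lt_succ_iff.mp hlt
        rw [← take_init (u (k+1)) hk, hu k, ih hk]
      · have : i = k + 1 := le_antisymm h hge
        subst this
        rw [take_all]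

end Ext
section Dirac
set_option linter.unusedSectionVars false
open scoped Classical

variable {X : ℕ → Type u} [∀ k, Finite (X k)]

/-- The label system with a single label `p` at the vertex `v`. -/
noncomputable def diracLab {n : ℕ} (v : Vertex X n) (p : Equiv.Perm (X n)) :
    ∀ k, Vertex X k → Equiv.Perm (X k) :=
  fun k w => if h : n = k then (if w = h ▸ v then h ▸ p else 1) else 1

/-- The tree automorphism with a single nontrivial label `p` at the vertex `v`. -/
noncomputable def dirac {n : ℕ} (v : Vertex X n) (p : Equiv.Perm (X n)) : TreeAut X :=
  ofPortrait (diracLab v p)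

lemma diracLab_level {n : ℕ} (v : Vertex X n) (p : Equiv.Perm (X n)) (w : Vertex X n) :
    diracLab v p n w = if w = v then p else 1 := by
  show dite _ _ _ = _
  rw [dif_pos rfl]

lemma diracLab_ne {n k : ℕ} (v : Vertex X n) (p : Equiv.Perm (X n)) (h : n ≠ k)
    (w : Vertex X k) : diracLab v p k w = 1 := dif_neg h

lemma isPrefixOf_self {n : ℕ} (v : Vertex X n) : IsPrefixOf v v := ⟨le_rfl, fun _ => rfl⟩

lemma dirac_one {n : ℕ} (v : Vertex X n) : dirac v (1 : Equiv.Perm (X n)) = 1 := by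
  apply ofPortrait_one
  intro k w
  by_cases h : n = k
  · subst h
    rw [diracLab_level]
    split <;> rfl
  · exact diracLab_ne v 1 h w

lemma dirac_mul {n : ℕ} (v : Vertex X n) (p q : Equiv.Perm (X n)) :
    dirac v p * dirac v q = dirac v (p * q) := by
  show ofPortrait _ * ofPortrait _ = _
  rw [ofPortrait_mul]
  apply ofPortrait_congr
  intro k w
  by_cases h : n = k
  · subst h
    have hact : portraitAct (diracLab v q) n w = w :=
      portraitAct_eq_self_of_triv _ w (fun j hj z => diracLab_ne v q (Nat.ne_of_gt hj) z)
    rw [hact, diracLab_level, diracLab_level, diracLab_level]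
    by_cases hw : w = v
    · rw [if_pos hw, if_pos hw, if_pos hw]
    · rw [if_neg hw, if_neg hw, if_neg hw, one_mul]
  · rw [diracLab_ne v p h, diracLab_ne v q h, diracLab_ne v (p*q) h, one_mul]

/-- `dirac v` as a group homomorphism. -/
noncomputable def diracHom {n : ℕ} (v : Vertex X n) : Equiv.Perm (X n) →* TreeAut X :=
  MonoidHom.mk' (fun p => dirac v p) (fun p q => (dirac_mul v p q).symm)

lemma dirac_inv {n : ℕ} (v : Vertex X n) (p : Equiv.Perm (X n)) :
    (dirac v p)⁻¹ = dirac v p⁻¹ := by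
  have := map_inv (diracHom v) p
  exact this.symm

lemma dirac_fixesOutside {n : ℕ} (v : Vertex X n) (p : Equiv.Perm (X n)) :
    FixesOutside (dirac v p) v := by
  apply fixesOutside_ofPortrait
  intro k w hw
  by_cases h : n = k
  · subst h
    rw [diracLab_level]
    rw [if_neg (show ¬ w = v from fun hwv => hw (by rw [hwv]; exact isPrefixOf_self v))]
  · exact diracLab_ne v p h w

lemma dirac_apply_level {n k : ℕ} (v : Vertex X n) (p : Equiv.Perm (X n)) (h : k ≤ n)
    (w : Vertex X k) : (dirac v p).1 k w = w := by
  rw [show (dirac v p).1 k w = portraitAct (diracLab v p) k w from rfl]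
  exact portraitAct_eq_self_of_triv _ w
    (fun j hj z => diracLab_ne v p (Nat.ne_of_gt (lt_of_lt_of_le hj h)) z)

lemma dirac_apply_snoc {n : ℕ} (v : Vertex X n) (p : Equiv.Perm (X n)) (w : Vertex X n)
    (y : X n) :
    (dirac v p).1 (n + 1) (Fin.snoc w y) = Fin.snoc w (if w = v then p y else y) := by
  rw [show (dirac v p).1 (n+1) (Fin.snoc w y) = portraitAct (diracLab v p) (n+1) (Fin.snoc w y)
    from rfl, portraitAct_snoc]
  have h1 : portraitAct (diracLab v p) n w = w :=
    portraitAct_eq_self_of_triv _ w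
      (fun j hj z => diracLab_ne v p (Nat.ne_of_gt hj) z)
  rw [h1, diracLab_level]
  by_cases hw : w = v
  · rw [if_pos hw, if_pos hw]
  · rw [if_neg hw, if_neg hw]
    rfl

/-- The rooted automorphism of the shifted tree `T_{X.σⁿ}` given by a permutation
of the alphabet `X n`. -/
noncomputable def rootedShift {n : ℕ} (p : Equiv.Perm (X n)) : TreeAut (shift X n) :=
  ofPortrait (X := shift X n) (fun m => match m with
    | 0 => fun _ => p
    | (_ + 1) => fun _ => 1)

lemma sectionAt_dirac_self {n : ℕ} (v : Vertex X n) (p : Equiv.Perm (X n)) :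
    sectionAt (dirac v p) v = rootedShift p := by
  show sectionAt (ofPortrait _) v = _
  rw [sectionAt_ofPortrait]
  apply ofPortrait_congr
  intro m w
  match m with
  | 0 =>
      show diracLab v p n (append v w) = p
      rw [diracLab_level, if_pos (append_zero v w)]
  | (m + 1) =>
      exact diracLab_ne v p (by omega) _

lemma sectionAt_dirac_high {n k : ℕ} (v : Vertex X n) (p : Equiv.Perm (X n))
    (h : n < k) (w : Vertex X k) : sectionAt (dirac v p) w = 1 := by
  show sectionAt (ofPortrait _) w = 1
  rw [sectionAt_ofPortrait]
  apply ofPortrait_one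
  intro m z
  exact diracLab_ne v p (by omega) _

end Dirac
section Spinal
set_option linter.unusedSectionVars false
open scoped Classical

variable {X : ℕ → Type u} [∀ k, Finite (X k)]
variable (S : ℕ → Type u) [∀ n, Group (S n)] [∀ n, MulAction (S n) (X n)]
variable (u : ∀ n, Vertex X n) (x : ∀ n, X n)

/-- The label system of the generalised spinal automorphism `s_c`. -/
noncomputable def slab (c : ∀ n, S (n + 1)) : ∀ k, Vertex X k → Equiv.Perm (X k) :=
  fun n => match n with
    | 0 => fun _ => 1
    | (k + 1) => fun v =>
        haveI := Classical.propDecidable (v = Fin.snoc (u k) (x k))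
        if v = Fin.snoc (u k) (x k) then MulAction.toPerm (c k) else 1

lemma spinalAut_eq (c : ∀ n, S (n + 1)) :
    spinalAut S u x c = ofPortrait (slab S u x c) := rfl

lemma slab_zero (c : ∀ n, S (n + 1)) (w : Vertex X 0) : slab S u x c 0 w = 1 := rfl

lemma slab_succ (c : ∀ n, S (n + 1)) (k : ℕ) (w : Vertex X (k + 1)) :
    slab S u x c (k + 1) w
      = if w = Fin.snoc (u k) (x k) then MulAction.toPerm (c k) else 1 := by
  show (haveI := Classical.propDecidable (w = Fin.snoc (u k) (x k))
    if w = Fin.snoc (u k) (x k) then MulAction.toPerm (c k) else 1) = _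
  congr

lemma take_spinal_vertex (hu : IsRay u) {j i : ℕ} (h : i ≤ j) :
    take (Fin.snoc (u j) (x j) : Vertex X (j + 1)) i (h.trans (Nat.le_succ j)) = u i := by
  rw [take_snoc (u j) (x j) h, take_ray hu]

lemma slab_ray (hx : ∀ n, Fin.snoc (u n) (x n) ≠ u (n + 1)) (c : ∀ n, S (n + 1)) (k : ℕ) :
    slab S u x c k (u k) = 1 := by
  match k with
  | 0 => rfl
  | (j + 1) =>
      rw [slab_succ, if_neg]
      intro h
      exact hx j h.symm

/-- The finitary "head" of a spinal automorphism: the labels at levels `≤ N`. -/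
noncomputable def headAut (c : ∀ n, S (n + 1)) (N : ℕ) : TreeAut X :=
  ofPortrait (fun k w => if k ≤ N then slab S u x c k w else 1)

/-- The "tail" of a spinal automorphism: the labels at levels `> N`. -/
noncomputable def tailAut (c : ∀ n, S (n + 1)) (N : ℕ) : TreeAut X :=
  ofPortrait (fun k w => if N < k then slab S u x c k w else 1)

lemma spinal_decomp (c : ∀ n, S (n + 1)) (N : ℕ) :
    spinalAut S u x c = headAut S u x c N * tailAut S u x c N := by
  rw [spinalAut_eq, headAut, tailAut, ofPortrait_mul]
  apply ofPortrait_congr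
  intro k w
  by_cases hk : k ≤ N
  · have hact : portraitAct (fun k w => if N < k then slab S u x c k w else 1) k w = w := by
      apply portraitAct_eq_self_of_triv
      intro j hj z
      rw [if_neg (show ¬ N < j by omega)]
    rw [hact, if_pos hk, if_neg (show ¬ N < k by omega), mul_one]
  · rw [if_neg hk, if_pos (show N < k by omega), one_mul]

lemma headAut_zero (c : ∀ n, S (n + 1)) : headAut S u x c 0 = 1 := by
  apply ofPortrait_one
  intro k w
  by_cases hk : k ≤ 0
  · interval_cases k
    rw [if_pos le_rfl]
    rfl
  · rw [if_neg hk]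

lemma headAut_succ (c : ∀ n, S (n + 1)) (N : ℕ) :
    headAut S u x c (N + 1)
      = headAut S u x c N * dirac (Fin.snoc (u N) (x N)) (MulAction.toPerm (c N)) := by
  rw [headAut, headAut, dirac, ofPortrait_mul]
  apply ofPortrait_congr
  intro k w
  rcases lt_trichotomy k (N + 1) with hk | hk | hk
  · have hact : portraitAct (diracLab (Fin.snoc (u N) (x N)) (MulAction.toPerm (c N))) k w
        = w := by
      apply portraitAct_eq_self_of_triv
      intro j hj z
      exact diracLab_ne _ _ (show N + 1 ≠ j by omega) z
    rw [hact, diracLab_ne _ _ (show N + 1 ≠ k by omega), if_pos (show k ≤ N by omega),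
      if_pos (show k ≤ N + 1 by omega), mul_one]
  · subst hk
    rw [if_neg (show ¬ N + 1 ≤ N by omega), if_pos (show N + 1 ≤ N + 1 from le_rfl),
      diracLab_level, slab_succ, one_mul]
  · rw [if_neg (show ¬ k ≤ N by omega), if_neg (show ¬ k ≤ N + 1 by omega),
      diracLab_ne _ _ (show N + 1 ≠ k by omega), one_mul]

lemma tailAut_fix_level (c : ∀ n, S (n + 1)) (N k : ℕ) (hk : k ≤ N + 1)
    (w : Vertex X k) : (tailAut S u x c N).1 k w = w := by
  rw [tailAut, ofPortrait_apply]
  apply portraitAct_eq_self_of_triv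
  intro j hj z
  rw [if_neg (show ¬ N < j by omega)]

lemma tailAut_fixesOutside (hu : IsRay u) (c : ∀ n, S (n + 1)) (N : ℕ) :
    FixesOutside (tailAut S u x c N) (u N) := by
  apply fixesOutside_ofPortrait
  intro k w hw
  by_cases hNk : N < k
  · match k, hNk with
    | (j + 1), hNk =>
        rw [if_pos hNk, slab_succ, if_neg]
        intro hw'
        apply hw
        rw [hw', isPrefixOf_iff_take (show N ≤ j + 1 by omega)]
        exact take_spinal_vertex u x hu (show N ≤ j by omega)
  · rw [if_neg hNk]

/-- Section of the tail at the spinal vertex: the rooted automorphism. -/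
lemma sectionAt_tailAut_spinal (hu : IsRay u) (hx : ∀ n, Fin.snoc (u n) (x n) ≠ u (n + 1))
    (c : ∀ n, S (n + 1)) (N : ℕ) :
    sectionAt (tailAut S u x c N) (Fin.snoc (u N) (x N) : Vertex X (N + 1))
      = rootedShift (MulAction.toPerm (c N)) := by
  rw [tailAut, sectionAt_ofPortrait]
  apply ofPortrait_congr
  intro m w
  match m with
  | 0 =>
      rw [if_pos (show N < N + 1 + 0 by omega)]
      show slab S u x c (N + 1) (append (n := N+1) (m := 0) (Fin.snoc (u N) (x N)) w) = _
      rw [slab_succ, if_pos (append_zero _ w)]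
  | (m + 1) =>
      rw [if_pos (show N < N + 1 + (m + 1) by omega)]
      show slab S u x c ((N + 1 + m) + 1)
        (append (n := N+1) (m := m+1) (Fin.snoc (u N) (x N)) w) = 1
      rw [slab_succ, if_neg]
      intro heq
      have h2 := congrArg (fun z => take z (N + 1)
        (show N + 1 ≤ N + 1 + (m + 1) by omega)) heq
      rw [take_append_self] at h2
      rw [show take (Fin.snoc (u (N+1+m)) (x (N+1+m)) : Vertex X (N+1+m+1)) (N+1)
            (show N + 1 ≤ N + 1 + (m + 1) by omega) = u (N+1)
          from take_spinal_vertex u x hu (show N + 1 ≤ N + 1 + m by omega)] at h2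
      exact hx N h2
end Spinal
section MoreSections
set_option linter.unusedSectionVars false
open scoped Classical

variable {X : ℕ → Type u} [∀ k, Finite (X k)]

lemma rootedShift_mul {n : ℕ} (p q : Equiv.Perm (X n)) :
    rootedShift p * rootedShift q = rootedShift (X := X) (p * q) := by
  rw [rootedShift, rootedShift, ofPortrait_mul]
  apply ofPortrait_congr
  intro m w
  match m with
  | 0 => rfl
  | (m + 1) => exact one_mul 1

/-- `rootedShift` as a homomorphism. -/
noncomputable def rootedShiftHom {n : ℕ} : Equiv.Perm (X n) →* TreeAut (shift X n) :=
  MonoidHom.mk' rootedShift (fun p q => (rootedShift_mul p q).symm)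

instance : Subsingleton (Vertex X 0) := ⟨fun a b => funext fun i => i.elim0⟩

lemma rootedAut_eq_dirac {R : Type*} [Group R] [MulAction R (X 0)] (s : R)
    (v : Vertex X 0) : rootedAut X s = dirac v (MulAction.toPerm s) := by
  apply ofPortrait_congr
  intro k w
  match k with
  | 0 =>
      rw [diracLab_level (n := 0) v _ w, if_pos (Subsingleton.elim w v)]
  | (k + 1) =>
      rw [diracLab_ne _ _ (by omega)]

variable (S : ℕ → Type u) [∀ n, Group (S n)] [∀ n, MulAction (S n) (X n)]
variable (u : ∀ n, Vertex X n) (x : ∀ n, X n)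

lemma sectionAt_headAut_high (c : ∀ n, S (n + 1)) (N : ℕ) {k : ℕ} (hk : N < k)
    (z : Vertex X k) : sectionAt (headAut S u x c N) z = 1 := by
  rw [headAut, sectionAt_ofPortrait]
  apply ofPortrait_one
  intro m w
  rw [if_neg (show ¬ k + m ≤ N by omega)]

lemma sectionAt_headAut_ray (hx : ∀ n, Fin.snoc (u n) (x n) ≠ u (n + 1))
    (c : ∀ n, S (n + 1)) (N : ℕ) : sectionAt (headAut S u x c N) (u N) = 1 := by
  rw [headAut, sectionAt_ofPortrait]
  apply ofPortrait_one
  intro m w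
  match m with
  | 0 =>
      rw [if_pos (show N + 0 ≤ N by omega)]
      show slab S u x c N (append (n := N) (m := 0) (u N) w) = 1
      rw [append_zero, slab_ray S u x hx]
  | (m + 1) =>
      rw [if_neg (show ¬ N + (m + 1) ≤ N by omega)]

lemma sectionAt_spinal_eq_tail (c : ∀ n, S (n + 1)) (N : ℕ) (w : Vertex X (N + 1)) :
    sectionAt (spinalAut S u x c) w = sectionAt (tailAut S u x c N) w := by
  rw [spinal_decomp S u x c N, sectionAt_mul,
    tailAut_fix_level S u x c N (N + 1) le_rfl w, sectionAt_headAut_high S u x c N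
      (Nat.lt_succ_self N) w, one_mul]

lemma sectionAt_spinal_ray (hx : ∀ n, Fin.snoc (u n) (x n) ≠ u (n + 1))
    (c : ∀ n, S (n + 1)) (N : ℕ) :
    sectionAt (spinalAut S u x c) (u N) = sectionAt (tailAut S u x c N) (u N) := by
  rw [spinal_decomp S u x c N, sectionAt_mul,
    tailAut_fix_level S u x c N N (Nat.le_succ N) (u N),
    sectionAt_headAut_ray S u x hx c N, one_mul]

lemma sectionAt_tailAut_other (hu : IsRay u) (c : ∀ n, S (n + 1)) (N : ℕ)
    (v : Vertex X (N + 1)) (h1 : v ≠ Fin.snoc (u N) (x N)) (h2 : v ≠ u (N + 1)) :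
    sectionAt (tailAut S u x c N) v = 1 := by
  rw [tailAut, sectionAt_ofPortrait]
  apply ofPortrait_one
  intro m w
  match m with
  | 0 =>
      rw [if_pos (show N < N + 1 + 0 by omega)]
      show slab S u x c (N + 1) (append (n := N+1) (m := 0) v w) = 1
      rw [slab_succ, if_neg]
      rw [append_zero]
      exact h1
  | (m + 1) =>
      rw [if_pos (show N < N + 1 + (m + 1) by omega)]
      show slab S u x c ((N + 1 + m) + 1) (append (n := N+1) (m := m+1) v w) = 1
      rw [slab_succ, if_neg]
      intro heq
      have h3 := congrArg (fun z => take z (N + 1)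
        (show N + 1 ≤ N + 1 + (m + 1) by omega)) heq
      rw [take_append_self] at h3
      rw [show take (Fin.snoc (u (N+1+m)) (x (N+1+m)) : Vertex X (N+1+m+1)) (N+1)
            (show N + 1 ≤ N + 1 + (m + 1) by omega) = u (N+1)
          from take_spinal_vertex u x hu (show N + 1 ≤ N + 1 + m by omega)] at h3
      exact h2 h3

lemma snoc_injective_right {n : ℕ} (w : Vertex X n) (a b : X n)
    (h : (Fin.snoc w a : Vertex X (n+1)) = Fin.snoc w b) : a = b := by
  have := congrFun h (Fin.last n)
  rwa [Fin.snoc_last, Fin.snoc_last] at this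

lemma u_succ_eq (hu : IsRay u) (N : ℕ) :
    u (N + 1) = Fin.snoc (u N) (u (N + 1) (Fin.last N)) := by
  conv_rhs => rw [← hu N]
  exact (Fin.snoc_init_self _).symm

/-- `a` acts trivially on layer `n`. -/
def Fix1 (a : TreeAut X) (n : ℕ) : Prop := ∀ w : Vertex X n, a.1 n w = w

lemma Fix1.inv {a : TreeAut X} {n : ℕ} (ha : Fix1 a n) : Fix1 a⁻¹ n := by
  intro w
  rw [coe_inv_apply]
  apply (a.1 n).injective
  rw [perm_apply_inv_self', ha w]

lemma Fix1.mul {a b : TreeAut X} {n : ℕ} (ha : Fix1 a n) (hb : Fix1 b n) :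
    Fix1 (a * b) n := by
  intro w
  rw [mul_apply', hb w, ha w]

lemma sectionAt_mul_fix {a b : TreeAut X} {n : ℕ} (hb : Fix1 b n) (v : Vertex X n) :
    sectionAt (a * b) v = sectionAt a v * sectionAt b v := by
  rw [sectionAt_mul, hb v]

lemma sectionAt_inv_fix {a : TreeAut X} {n : ℕ} (ha : Fix1 a n) (v : Vertex X n) :
    sectionAt a⁻¹ v = (sectionAt a v)⁻¹ := by
  rw [sectionAt_inv, ha.inv v]

end MoreSections
section StarSection
set_option linter.unusedSectionVars false
open scoped Classical

variable {X : ℕ → Type u} [∀ k, Finite (X k)]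
variable (S : ℕ → Type u) [∀ n, Group (S n)] [∀ n, MulAction (S n) (X n)]
variable (u : ∀ n, Vertex X n) (x : ∀ n, X n)
variable {G : Type u} [Group G]

/-- All sections at levels `≥ n` are trivial. -/
def SuppFrom (n : ℕ) (h : TreeAut X) : Prop :=
  ∀ (k : ℕ), n ≤ k → ∀ v : Vertex X k, sectionAt h v = 1

lemma SuppFrom.mono {n m : ℕ} {a : TreeAut X} (h : n ≤ m) (ha : SuppFrom n a) :
    SuppFrom m a := fun k hk => ha k (h.trans hk)

lemma SuppFrom.one (n : ℕ) : SuppFrom n (1 : TreeAut X) :=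
  fun _ _ v => sectionAt_one v

lemma SuppFrom.mul {n : ℕ} {a b : TreeAut X} (ha : SuppFrom n a) (hb : SuppFrom n b) :
    SuppFrom n (a * b) := by
  intro k hk v
  rw [sectionAt_mul, ha k hk, hb k hk, one_mul]

lemma SuppFrom.inv {n : ℕ} {a : TreeAut X} (ha : SuppFrom n a) : SuppFrom n a⁻¹ := by
  intro k hk v
  rw [sectionAt_inv, ha k hk, inv_one]

lemma SuppFrom.dirac {n : ℕ} (v : Vertex X n) (p : Equiv.Perm (X n)) :
    SuppFrom (n + 1) (dirac v p) :=
  fun k hk z => sectionAt_dirac_high v p (by omega) z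

lemma rooted_mem (φ : G →* ∀ n, S (n + 1)) (s : S 0) :
    rootedAut X s ∈ gammaGroup S φ u x :=
  Subgroup.subset_closure (Set.mem_union_left _ ⟨s, rfl⟩)

lemma spinal_mem (φ : G →* ∀ n, S (n + 1)) (g : G) :
    spinalAut S u x (fun n => φ g n) ∈ gammaGroup S φ u x :=
  Subgroup.subset_closure (Set.mem_union_right _ ⟨g, rfl⟩)

/-- The key property `(★)`: all single-label automorphisms with labels in `S n`
belong to `Γ`. -/
def StarP (φ : G →* ∀ n, S (n + 1)) (n : ℕ) : Prop :=
  ∀ (v : Vertex X n) (s : S n), dirac v (MulAction.toPerm s) ∈ gammaGroup S φ u x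

lemma star_zero (φ : G →* ∀ n, S (n + 1)) : StarP S u x φ 0 := by
  intro v s
  rw [← rootedAut_eq_dirac s v]
  exact rooted_mem S u x φ s

lemma headAut_mem (φ : G →* ∀ n, S (n + 1)) (c : ∀ n, S (n + 1)) (N : ℕ)
    (hstar : ∀ k, k < N → StarP S u x φ (k + 1)) :
    headAut S u x c N ∈ gammaGroup S φ u x := by
  induction N with
  | zero => rw [headAut_zero]; exact one_mem _
  | succ N ih =>
      rw [headAut_succ]
      exact mul_mem (ih (fun k hk => hstar k (by omega)))
        (hstar N (by omega) (Fin.snoc (u N) (x N)) (c N))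

lemma tailAut_mem (φ : G →* ∀ n, S (n + 1)) (g : G) (N : ℕ)
    (hstar : ∀ k, k < N → StarP S u x φ (k + 1)) :
    tailAut S u x (fun k => φ g k) N ∈ gammaGroup S φ u x := by
  have hd := spinal_decomp S u x (fun k => φ g k) N
  have : tailAut S u x (fun k => φ g k) N
      = (headAut S u x (fun k => φ g k) N)⁻¹ * spinalAut S u x (fun k => φ g k) := by
    rw [hd, inv_mul_cancel_left]
  rw [this]
  exact mul_mem (inv_mem (headAut_mem S u x φ _ N hstar)) (spinal_mem S u x φ g)

lemma exists_move (φ : G →* ∀ n, S (n + 1)) (hu : IsRay u)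
    (htrans : ∀ (n : ℕ) (a b : X n), ∃ s : S n, s • a = b) :
    ∀ (n : ℕ), (∀ k, k < n → StarP S u x φ k) → ∀ v : Vertex X n,
      ∃ h : TreeAut X, h ∈ gammaGroup S φ u x ∧ SuppFrom n h ∧ h.1 n (u n) = v := by
  intro n
  induction n with
  | zero =>
      intro _ v
      exact ⟨1, one_mem _, SuppFrom.one 0, Subsingleton.elim _ _⟩
  | succ n ih =>
      intro hstar v
      obtain ⟨h', hΓ, hS, hv⟩ := ih (fun k hk => hstar k (by omega)) (Fin.init v)
      have e1 : u (n + 1) = Fin.snoc (u n) (u (n + 1) (Fin.last n)) := u_succ_eq u hu n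
      set y : X n := u (n + 1) (Fin.last n) with hy
      set b₀ : X n := h'.1 (n + 1) (Fin.snoc (u n) y) (Fin.last n) with hb₀
      obtain ⟨τ, hτ⟩ := htrans n b₀ (v (Fin.last n))
      refine ⟨dirac (Fin.init v) (MulAction.toPerm τ) * h',
        mul_mem (hstar n (by omega) (Fin.init v) τ) hΓ,
        (SuppFrom.dirac _ _).mul (hS.mono (Nat.le_succ n)), ?_⟩
      rw [mul_apply', e1, apply_snoc_decomp, hv, ← hb₀, dirac_apply_snoc, if_pos rfl]
      show Fin.snoc (Fin.init v) (τ • b₀) = v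
      rw [hτ]
      exact Fin.snoc_init_self v

lemma conj_dirac (hne : ∀ j, Nonempty (X j)) {n : ℕ} (h : TreeAut X)
    (hS : SuppFrom n h) (v₀ v : Vertex X n) (hv : h.1 n v₀ = v) (p : Equiv.Perm (X n)) :
    h * dirac v₀ p * h⁻¹ = dirac v p := by
  apply ext_by_sections (n := n) hne
  · intro w
    rw [mul_apply', mul_apply', dirac_apply_level v₀ p le_rfl, coe_inv_apply,
      perm_apply_inv_self', dirac_apply_level v p le_rfl]
  · intro w
    obtain ⟨z, rfl⟩ : ∃ z, h.1 n z = w := ⟨(h.1 n).symm w, (h.1 n).apply_symm_apply w⟩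
    rw [sectionAt_conj h (dirac v₀ p) z (dirac_apply_level v₀ p le_rfl z) (hS n le_rfl z)]
    by_cases hzv : z = v₀
    · rw [hzv, hv, sectionAt_dirac_self, sectionAt_dirac_self]
    · have hne2 : h.1 n z ≠ v := fun he => hzv ((h.1 n).injective (he.trans hv.symm))
      rw [sectionAt_eq_one_of_ne (dirac_fixesOutside v₀ p) hzv,
        sectionAt_eq_one_of_ne (dirac_fixesOutside v p) hne2]

lemma exists_stab_move {M : Type u} [Group M] [Finite M] {α : Type u} [MulAction M α]
    (htr : ∀ a b : α, ∃ s : M, s • a = b) {a b : α}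
    (hst : MulAction.stabilizer M a ≠ MulAction.stabilizer M b) :
    ∃ σ : M, σ • a = a ∧ σ • b ≠ b := by
  by_contra hco
  push_neg at hco
  apply hst
  have hle : MulAction.stabilizer M a ≤ MulAction.stabilizer M b := by
    intro σ hσ
    rw [MulAction.mem_stabilizer_iff] at hσ ⊢
    exact hco σ hσ
  have horb : MulAction.orbitRel M α a b := by
    obtain ⟨g, hg⟩ := htr b a
    exact ⟨g, hg⟩
  have hcard : Nat.card (MulAction.stabilizer M b) ≤ Nat.card (MulAction.stabilizer M a) := by
    rw [Nat.card_congr (MulAction.stabilizerEquivStabilizerOfOrbitRel horb).toEquiv]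
  exact Subgroup.eq_of_le_of_card_ge hle hcard

end StarSection
section StarSpine
set_option linter.unusedSectionVars false
open scoped Classical
open scoped commutatorElement

variable {X : ℕ → Type u} [∀ k, Finite (X k)]
variable (S : ℕ → Type u) [∀ n, Group (S n)] [∀ n, MulAction (S n) (X n)]
variable (u : ∀ n, Vertex X n) (x : ∀ n, X n)
variable {G : Type u} [Group G]

lemma star_spine [∀ n, Finite (S n)] (φ : G →* ∀ n, S (n + 1))
    (hne : ∀ j, Nonempty (X j)) (hu : IsRay u)
    (hx : ∀ n, Fin.snoc (u n) (x n) ≠ u (n + 1))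
    (htrans : ∀ (n : ℕ) (a b : X n), ∃ s : S n, s • a = b)
    (hstab : ∀ n, MulAction.stabilizer (S n) (x n)
      ≠ MulAction.stabilizer (S n) (show X n from u (n + 1) (Fin.last n)))
    (hSperf : ∀ n, commutator (S n) = ⊤)
    (hφsub : ∀ n, Function.Surjective (fun g : G => φ g n))
    (n : ℕ) (hstar : ∀ k, k ≤ n → StarP S u x φ k) (s : S (n + 1)) :
    dirac (Fin.snoc (u n) (x n) : Vertex X (n + 1)) (MulAction.toPerm s)
      ∈ gammaGroup S φ u x := by
  have hsuf : ∀ a b : S (n + 1),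
      dirac (Fin.snoc (u n) (x n) : Vertex X (n + 1)) (MulAction.toPerm ⁅a, b⁆)
        ∈ gammaGroup S φ u x := by
    intro a b
    obtain ⟨g, hg⟩ := hφsub n a
    obtain ⟨g', hg'⟩ := hφsub n b
    have e1 : u (n + 1) = Fin.snoc (u n) (u (n + 1) (Fin.last n)) := u_succ_eq u hu n
    have hxy : x n ≠ u (n + 1) (Fin.last n) := by
      intro he
      apply hx n
      rw [he, ← e1]
    obtain ⟨σ, hσx, hσy⟩ := exists_stab_move (htrans n) (hstab n)
    set y : X n := u (n + 1) (Fin.last n) with hydef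
    set p : Equiv.Perm (X n) := MulAction.toPerm σ with hpdef
    have hpx : p (x n) = x n := hσx
    set v₀ : Vertex X (n + 1) := Fin.snoc (u n) (x n) with hv₀
    set r : TreeAut X := dirac (u n) p with hr
    set t : TreeAut X := tailAut S u x (fun k => φ g k) n with ht
    set t' : TreeAut X := tailAut S u x (fun k => φ g' k) n with ht'
    have hrmem : r ∈ gammaGroup S φ u x := hstar n le_rfl (u n) σ
    have htmem : t ∈ gammaGroup S φ u x :=
      tailAut_mem S u x φ g n (fun k hk => hstar (k + 1) (by omega))
    have ht'mem : t' ∈ gammaGroup S φ u x :=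
      tailAut_mem S u x φ g' n (fun k hk => hstar (k + 1) (by omega))
    set C : TreeAut X := r * t' * r⁻¹ with hC
    have hCmem : C ∈ gammaGroup S φ u x := mul_mem (mul_mem hrmem ht'mem) (inv_mem hrmem)
    have hFt : Fix1 t (n + 1) := fun w => tailAut_fix_level S u x _ n (n + 1) le_rfl w
    have hFt' : Fix1 t' (n + 1) := fun w => tailAut_fix_level S u x _ n (n + 1) le_rfl w
    have hFC : Fix1 C (n + 1) := by
      intro w
      rw [hC, mul_apply', mul_apply', hFt' ((r⁻¹).1 (n + 1) w), coe_inv_apply,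
        perm_apply_inv_self']
    have hCsec : ∀ w : Vertex X (n + 1), sectionAt C w = sectionAt t' ((r⁻¹).1 (n + 1) w) := by
      intro w
      rw [hC, sectionAt_mul, sectionAt_mul, hr, dirac_inv,
        sectionAt_dirac_high _ _ (Nat.lt_succ_self n),
        sectionAt_dirac_high _ _ (Nat.lt_succ_self n), one_mul, mul_one]
    have hpinvx : p⁻¹ (x n) = x n := by
      conv_lhs => rw [← hpx]
      rw [perm_inv_apply_self']
    have hrv₀ : (r⁻¹).1 (n + 1) v₀ = v₀ := by
      rw [hr, dirac_inv, hv₀, dirac_apply_snoc, if_pos rfl, hpinvx]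
    have hruy : (r⁻¹).1 (n + 1) (u (n + 1)) = Fin.snoc (u n) (p⁻¹ y) := by
      conv_lhs => rw [e1]
      rw [hr, dirac_inv, dirac_apply_snoc, if_pos rfl]
    have hz1 : p⁻¹ y ≠ y := by
      intro he
      have h2 := congrArg (fun w => p w) he
      rw [perm_apply_inv_self'] at h2
      exact hσy h2.symm
    have hz2 : p⁻¹ y ≠ x n := by
      intro he
      have h2 := congrArg (fun w => p w) he
      rw [perm_apply_inv_self', hpx] at h2
      exact hxy h2.symm
    have key : t * C * t⁻¹ * C⁻¹ = dirac v₀ (MulAction.toPerm ⁅a, b⁆) := by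
      apply ext_by_sections (n := n + 1) hne
      · intro w
        rw [mul_apply', mul_apply', mul_apply', hFC.inv w, hFt.inv _, hFC _, hFt _,
          dirac_apply_level _ _ le_rfl]
      · intro w
        rw [sectionAt_mul_fix hFC.inv w, sectionAt_mul_fix hFt.inv w,
          sectionAt_mul_fix hFC w, sectionAt_inv_fix hFt w, sectionAt_inv_fix hFC w,
          hCsec w]
        by_cases hw0 : w = v₀
        · rw [hw0, hrv₀, hv₀, ht, ht', sectionAt_tailAut_spinal S u x hu hx _ n,
            sectionAt_tailAut_spinal S u x hu hx _ n, ← hv₀, sectionAt_dirac_self]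
          rw [show φ g n = a from hg, show φ g' n = b from hg']
          have hFa : ∀ z : S (n + 1), rootedShift (X := X) (MulAction.toPerm z)
              = (rootedShiftHom.comp (MulAction.toPermHom (S (n+1)) (X (n+1)))) z :=
            fun z => rfl
          rw [hFa a, hFa b, hFa ⁅a, b⁆, ← map_inv, ← map_inv, ← map_mul, ← map_mul,
            ← map_mul, commutatorElement_def]
        · by_cases hw1 : w = u (n + 1)
          · rw [hw1, hruy, ht', sectionAt_tailAut_other S u x hu _ n _
              (fun h => hz2 (snoc_injective_right _ _ _ h))
              (fun h => hz1 (snoc_injective_right _ _ _ (h.trans e1)))]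
            rw [sectionAt_eq_one_of_ne (dirac_fixesOutside v₀ _)
              (show u (n + 1) ≠ v₀ from fun h => hx n (by rw [← hv₀, ← h]))]
            group
          · rw [ht, sectionAt_tailAut_other S u x hu _ n w (by rw [← hv₀]; exact hw0) hw1]
            rw [sectionAt_eq_one_of_ne (dirac_fixesOutside v₀ _) hw0]
            group
    rw [← key]
    exact mul_mem (mul_mem (mul_mem htmem hCmem) (inv_mem htmem)) (inv_mem hCmem)
  have hle : commutator (S (n + 1)) ≤ (gammaGroup S φ u x).comap
      ((diracHom (Fin.snoc (u n) (x n) : Vertex X (n + 1))).comp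
        (MulAction.toPermHom (S (n + 1)) (X (n + 1)))) :=
    Subgroup.commutator_le.mpr (fun a _ b _ => hsuf a b)
  have hs : s ∈ commutator (S (n + 1)) := by rw [hSperf (n + 1)]; trivial
  exact hle hs

lemma star_all [∀ n, Finite (S n)] (φ : G →* ∀ n, S (n + 1))
    (hne : ∀ j, Nonempty (X j)) (hu : IsRay u)
    (hx : ∀ n, Fin.snoc (u n) (x n) ≠ u (n + 1))
    (htrans : ∀ (n : ℕ) (a b : X n), ∃ s : S n, s • a = b)
    (hstab : ∀ n, MulAction.stabilizer (S n) (x n)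
      ≠ MulAction.stabilizer (S n) (show X n from u (n + 1) (Fin.last n)))
    (hSperf : ∀ n, commutator (S n) = ⊤) :
    ∀ (hφsub : ∀ n, Function.Surjective (fun g : G => φ g n)) (m : ℕ), StarP S u x φ m := by
  intro hφsub m
  induction m using Nat.strong_induction_on with
  | _ m ih =>
      match m with
      | 0 => exact star_zero S u x φ
      | (n + 1) =>
          intro v s
          have h0 := star_spine S u x φ hne hu hx htrans hstab hSperf hφsub n
            (fun k hk => ih k (by omega)) s
          obtain ⟨h₁, hΓ₁, hS₁, hv₁⟩ := exists_move S u x φ hu htrans (n + 1)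
            (fun k hk => ih k hk) (Fin.snoc (u n) (x n))
          obtain ⟨h₂, hΓ₂, hS₂, hv₂⟩ := exists_move S u x φ hu htrans (n + 1)
            (fun k hk => ih k hk) v
          have hbigmove : (h₂ * h₁⁻¹).1 (n + 1) (Fin.snoc (u n) (x n)) = v := by
            rw [mul_apply', coe_inv_apply, ← hv₁, perm_inv_apply_self', hv₂]
          have hconj := conj_dirac hne (h₂ * h₁⁻¹) (hS₂.mul hS₁.inv)
            (Fin.snoc (u n) (x n)) v hbigmove (MulAction.toPerm s)
          rw [← hconj]
          exact mul_mem (mul_mem (mul_mem hΓ₂ (inv_mem hΓ₁)) h0)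
            (inv_mem (mul_mem hΓ₂ (inv_mem hΓ₁)))

end StarSpine
section Final
set_option linter.unusedSectionVars false
set_option maxHeartbeats 1000000
open scoped Classical

variable {X : ℕ → Type u} [∀ k, Finite (X k)]
variable (S : ℕ → Type u) [∀ n, Group (S n)] [∀ n, MulAction (S n) (X n)]
variable (u : ∀ n, Vertex X n) (x : ∀ n, X n)
variable {G : Type u} [Group G]

lemma layered_big [∀ n, Finite (S n)] (φ : G →* ∀ n, S (n + 1))
    (hne : ∀ j, Nonempty (X j)) (hu : IsRay u)
    (hx : ∀ n, Fin.snoc (u n) (x n) ≠ u (n + 1))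
    (htrans : ∀ (n : ℕ) (a b : X n), ∃ s : S n, s • a = b)
    (hstab : ∀ n, MulAction.stabilizer (S n) (x n)
      ≠ MulAction.stabilizer (S n) (show X n from u (n + 1) (Fin.last n)))
    (hSperf : ∀ n, commutator (S n) = ⊤)
    (hφsub : ∀ n, Function.Surjective (fun g : G => φ g n)) :
    ∀ g ∈ gammaGroup S φ u x, ∀ (n : ℕ) (v w : Vertex X n),
      ∃ h, h ∈ gammaGroup S φ u x ∧ FixesOutside h v ∧ sectionAt h v = sectionAt g w := by
  have hstar : ∀ m, StarP S u x φ m :=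
    star_all S u x φ hne hu hx htrans hstab hSperf hφsub
  set LL : Subgroup (TreeAut X) :=
    { carrier := {g | ∀ (n : ℕ) (v w : Vertex X n), ∃ h, h ∈ gammaGroup S φ u x ∧
        FixesOutside h v ∧ sectionAt h v = sectionAt g w}
      one_mem' := by
        intro n v w
        exact ⟨1, one_mem _, FixesOutside.one v, by rw [sectionAt_one, sectionAt_one]⟩
      mul_mem' := by
        intro a b ha hb n v w
        obtain ⟨h₁, h₁Γ, h₁F, h₁s⟩ := ha n v (b.1 n w)
        obtain ⟨h₂, h₂Γ, h₂F, h₂s⟩ := hb n v w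
        refine ⟨h₁ * h₂, mul_mem h₁Γ h₂Γ, h₁F.mul h₂F, ?_⟩
        rw [sectionAt_mul, sectionAt_mul, h₂F.apply_self, h₁s, h₂s]
      inv_mem' := by
        intro a ha n v w
        obtain ⟨h₁, h₁Γ, h₁F, h₁s⟩ := ha n v ((a⁻¹).1 n w)
        refine ⟨h₁⁻¹, inv_mem h₁Γ, h₁F.inv, ?_⟩
        rw [sectionAt_inv h₁, (h₁F.inv).apply_self, h₁s, sectionAt_inv a] } with hLL
  have hsub : gammaGroup S φ u x ≤ LL := by
    apply (Subgroup.closure_le LL).mpr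
    rintro q (⟨s, rfl⟩ | ⟨g0, rfl⟩)
    · -- rooted generator
      intro n v w
      match n with
      | 0 =>
          exact ⟨rootedAut X s, rooted_mem S u x φ s,
            fun k w' hnp => absurd ⟨Nat.zero_le k, fun i => i.elim0⟩ hnp,
            by rw [Subsingleton.elim v w]⟩
      | (N + 1) =>
          have hsec : sectionAt (rootedAut X s) w = 1 := by
            rw [rootedAut_eq_dirac s (u 0)]
            exact sectionAt_dirac_high _ _ (Nat.succ_pos N) w
          exact ⟨1, one_mem _, FixesOutside.one v, by rw [sectionAt_one, hsec]⟩
    · -- spinal generator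
      intro n v w
      match n with
      | 0 =>
          exact ⟨spinalAut S u x (fun k => φ g0 k), spinal_mem S u x φ g0,
            fun k w' hnp => absurd ⟨Nat.zero_le k, fun i => i.elim0⟩ hnp,
            by rw [Subsingleton.elim v w]⟩
      | (N + 1) =>
          by_cases hw : w = u (N + 1)
          · obtain ⟨h₁, hΓ₁, hS₁, hv₁⟩ := exists_move S u x φ hu htrans (N + 1)
              (fun k _ => hstar k) v
            have htmem : tailAut S u x (fun k => φ g0 k) (N + 1) ∈ gammaGroup S φ u x :=
              tailAut_mem S u x φ g0 (N + 1) (fun k _ => hstar (k + 1))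
            refine ⟨h₁ * tailAut S u x (fun k => φ g0 k) (N + 1) * h₁⁻¹,
              mul_mem (mul_mem hΓ₁ htmem) (inv_mem hΓ₁), ?_, ?_⟩
            · have hcf := (tailAut_fixesOutside S u x hu (fun k => φ g0 k) (N + 1)).conj h₁
              rw [hv₁] at hcf
              exact hcf
            · rw [hw, sectionAt_spinal_ray S u x hx (fun k => φ g0 k) (N + 1), ← hv₁]
              exact sectionAt_conj h₁ _ (u (N + 1))
                (tailAut_fix_level S u x _ (N + 1) (N + 1) (Nat.le_succ (N + 1)) (u (N + 1)))
                (hS₁ (N + 1) le_rfl (u (N + 1)))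
          · have hts : sectionAt (spinalAut S u x (fun k => φ g0 k)) w
                = sectionAt (tailAut S u x (fun k => φ g0 k) N) w :=
              sectionAt_spinal_eq_tail S u x (fun k => φ g0 k) N w
            by_cases hw0 : w = Fin.snoc (u N) (x N)
            · refine ⟨dirac v (MulAction.toPerm (φ g0 N)), hstar (N + 1) v (φ g0 N),
                dirac_fixesOutside _ _, ?_⟩
              rw [sectionAt_dirac_self, hts, hw0,
                sectionAt_tailAut_spinal S u x hu hx (fun k => φ g0 k) N]
            · refine ⟨1, one_mem _, FixesOutside.one v, ?_⟩
              rw [sectionAt_one, hts,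
                sectionAt_tailAut_other S u x hu (fun k => φ g0 k) N w hw0 hw]
  intro g hg
  exact hsub hg

end Final

/-- The group `Γ` of the construction is a spherically transitive layered group, hence
a branch group. -/
theorem statement6
    (X : ℕ → Type) [∀ n, Finite (X n)] (hX2 : ∀ n, 2 ≤ Nat.card (X n))
    (S : ℕ → Type) [∀ n, Group (S n)] [∀ n, Finite (S n)] [∀ n, MulAction (S n) (X n)]
    (hSnt : ∀ n, Nontrivial (S n))
    (hSperf : ∀ n, commutator (S n) = ⊤)
    (hfaith : ∀ (n : ℕ) (s : S n), (∀ y : X n, s • y = y) → s = 1)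
    (htrans : ∀ (n : ℕ) (a b : X n), ∃ s : S n, s • a = b)
    (hnonreg : ∀ n : ℕ, ∃ (s : S n) (y : X n), s ≠ 1 ∧ s • y = y)
    (G : Type) [Group G] (φ : G →* ∀ n, S (n + 1))
    (hφinj : Function.Injective φ)
    (hφsub : ∀ n, Function.Surjective (fun g : G => φ g n))
    (hφinf : ∀ g : G, {n : ℕ | φ g n ≠ 1}.Finite → g = 1)
    (u : ∀ n, Vertex X n) (hu : IsRay u)
    (x : ∀ n, X n) (hx : ∀ n, Fin.snoc (u n) (x n) ≠ u (n + 1))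
    (hstab : ∀ n, MulAction.stabilizer (S n) (x n)
      ≠ MulAction.stabilizer (S n) (show X n from u (n + 1) (Fin.last n))) :
    SphericallyTransitive (gammaGroup S φ u x) ∧ Layered (gammaGroup S φ u x) ∧
    (∀ n, (RistL (gammaGroup S φ u x) n).relIndex (gammaGroup S φ u x) ≠ 0) := by
  classical
  have hne : ∀ j, Nonempty (X j) := by
    intro j
    by_contra hempty
    rw [not_nonempty_iff] at hempty
    have h2 := hX2 j
    rw [Nat.card_of_isEmpty] at h2
    omega
  have hstar : ∀ m, StarP S u x φ m :=
    star_all S u x φ hne hu hx htrans hstab hSperf hφsub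
  have hlay := layered_big S u x φ hne hu hx htrans hstab hSperf hφsub
  refine ⟨?_, fun g hg n v => hlay g hg n v v, ?_⟩
  · intro n v w
    obtain ⟨h₁, hΓ₁, -, hv₁⟩ := exists_move S u x φ hu htrans n (fun k _ => hstar k) v
    obtain ⟨h₂, hΓ₂, -, hv₂⟩ := exists_move S u x φ hu htrans n (fun k _ => hstar k) w
    refine ⟨h₂ * h₁⁻¹, mul_mem hΓ₂ (inv_mem hΓ₁), ?_⟩
    rw [mul_apply', coe_inv_apply, ← hv₁, perm_inv_apply_self', hv₂]
  · intro n
    haveI : Fintype (Vertex X n) := Fintype.ofFinite _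
    set ψ : ↥(gammaGroup S φ u x) →* Equiv.Perm (Vertex X n) :=
      MonoidHom.mk' (fun g => (g : TreeAut X).1 n) (fun a b => rfl) with hψ
    have hker : ψ.ker ≤ (RistL (gammaGroup S φ u x) n).subgroupOf (gammaGroup S φ u x) := by
      intro g hgk
      rw [Subgroup.mem_subgroupOf]
      have hfix : ∀ z : Vertex X n, (g : TreeAut X).1 n z = z := by
        intro z
        have h1 : ψ g = 1 := hgk
        exact Equiv.ext_iff.mp h1 z
      choose hf hfΓ hfF hfs using fun w : Vertex X n => hlay (g : TreeAut X) g.2 n w w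
      have hfix1 : ∀ a ∈ (Finset.univ : Finset (Vertex X n)).toList.map hf,
          ∀ z : Vertex X n, a.1 n z = z := by
        intro a ha z
        obtain ⟨w, -, rfl⟩ := List.mem_map.mp ha
        exact fixes_level_of_fixesOutside (hfF w) z
      have hgeq : (g : TreeAut X)
          = ((Finset.univ : Finset (Vertex X n)).toList.map hf).prod := by
        apply ext_by_sections hne (n := n)
        · intro z
          rw [hfix z, (sectionAt_list_prod z _ hfix1).1]
        · intro z
          rw [(sectionAt_list_prod z _ hfix1).2, List.map_map,
            list_prod_map_eq_single ((fun a => sectionAt a z) ∘ hf) z _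
              (Finset.mem_toList.mpr (Finset.mem_univ z))
              (fun w _ hwz => sectionAt_eq_one_of_ne (hfF w) (Ne.symm hwz))
              (Finset.nodup_toList _)]
          exact (hfs z).symm
      rw [hgeq]
      apply Subgroup.list_prod_mem
      intro a ha
      obtain ⟨w, -, rfl⟩ := List.mem_map.mp ha
      exact Subgroup.subset_closure (Set.mem_iUnion.mpr ⟨w, ⟨hfΓ w, hfF w⟩⟩)
    have hdvd := Subgroup.index_dvd_of_le hker
    have hne0 : ψ.ker.index ≠ 0 := by
      rw [Subgroup.index_ker]
      exact Nat.card_pos.ne'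
    intro h0
    have h0' : ((RistL (gammaGroup S φ u x) n).subgroupOf (gammaGroup S φ u x)).index = 0 := h0
    rw [h0'] at hdvd
    exact hne0 (Nat.eq_zero_of_zero_dvd hdvd)


end BranchPaper
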